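/- arXiv:1912.12454 — 2 statements merged into one kernel-verified Lean document; each statement's English description precedes it below -/
import Mathlib

section
/- Let U ⊆ X be open convex and f ∈ C^{1u}(U,Y). If f′ takes U-bounded weakly p-compact subsets of U into relatively compact subsets of K(X,Y), then f′ : U → K(X,Y) is p-convergent: for every U-bounded sequence (x_n) weakly p-convergent to x ∈ U, f′(x_n) → f′(x) in operator norm. -/
open Filter Topology Metric Set
open scoped ENNReal NNReal

section Defs

variable {X Y : Type*} [NormedAddCommGroup X] [NormedSpace ℝ X]
  [NormedAddCommGroup Y] [NormedSpace ℝ Y]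

/-- A sequence `(x n)` in `X` is weakly `p`-summable if `(f (x n))ₙ ∈ ℓ_p` for every
continuous linear functional `f` (for `p = ∞`, this means `(f (x n))ₙ ∈ c₀`). -/
def WeaklyLpSummable (p : ℝ≥0∞) (x : ℕ → X) : Prop :=
  ∀ f : X →L[ℝ] ℝ,
    if p = ⊤ then Filter.Tendsto (fun n => f (x n)) Filter.atTop (nhds 0)
    else Memℓp (fun n => f (x n)) p

/-- A sequence is weakly `p`-Cauchy if all difference sequences along pairs of strictly
monotone index sequences are weakly `p`-summable. -/
def WeaklyLpCauchy (p : ℝ≥0∞) (x : ℕ → X) : Prop :=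
  ∀ m k : ℕ → ℕ, StrictMono m → StrictMono k →
    WeaklyLpSummable p (fun i => x (m i) - x (k i))

/-- `(x n)` is weakly `p`-convergent to `x₀` if `(x n - x₀)` is weakly `p`-summable. -/
def WeaklyLpConvergentTo (p : ℝ≥0∞) (x : ℕ → X) (x₀ : X) : Prop :=
  WeaklyLpSummable p (fun n => x n - x₀)

/-- A set `K ⊆ L(X,Y)` is uniformly `p`-convergent if `lim_n sup_{T ∈ K} ‖T (x n)‖ = 0`
for every weakly `p`-summable sequence `(x n)`. -/
def UniformlyPConvergent (p : ℝ≥0∞) (K : Set (X →L[ℝ] Y)) : Prop :=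
  ∀ x : ℕ → X, WeaklyLpSummable p x →
    ∀ ε > 0, ∃ N : ℕ, ∀ n ≥ N, ∀ T ∈ K, ‖T (x n)‖ < ε

/-- `B` is `U`-bounded: contained in `U`, bounded, and at positive distance from `∂U`. -/
def UBounded (U B : Set X) : Prop :=
  B ⊆ U ∧ Bornology.IsBounded B ∧ ∃ r > 0, ∀ b ∈ B, Metric.ball b r ⊆ U

/-- A sequence is `U`-bounded if its range is a `U`-bounded set. -/
def UBoundedSeq (U : Set X) (x : ℕ → X) : Prop :=
  UBounded U (Set.range x)

/-- `f ∈ C^{1u}(U,Y)`: `f` is differentiable on `U` with derivative `f'` which is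
uniformly continuous on `U`-bounded subsets of `U`. -/
def C1u (U : Set X) (f : X → Y) (f' : X → X →L[ℝ] Y) : Prop :=
  (∀ x ∈ U, HasFDerivAt f (f' x) x) ∧
  ∀ B : Set X, UBounded U B → UniformContinuousOn f' B

/-- `T` is a `p`-convergent operator: it maps weakly `p`-summable sequences to norm-null
sequences. -/
def PConvergentOp (p : ℝ≥0∞) (T : X →L[ℝ] Y) : Prop :=
  ∀ x : ℕ → X, WeaklyLpSummable p x →
    Filter.Tendsto (fun n => ‖T (x n)‖) Filter.atTop (nhds 0)

/-- `f` is weakly `p`-sequentially continuous on `U`: it maps `U`-bounded weakly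
`p`-Cauchy sequences to norm convergent sequences. -/
def WeaklyPSeqCont (p : ℝ≥0∞) (U : Set X) (f : X → Y) : Prop :=
  ∀ x : ℕ → X, UBoundedSeq U x → WeaklyLpCauchy p x →
    ∃ l : Y, Filter.Tendsto (fun n => f (x n)) Filter.atTop (nhds l)

/-- `K` is weakly `p`-precompact: every sequence in `K` has a weakly `p`-Cauchy
subsequence. -/
def WeaklyPPrecompact (p : ℝ≥0∞) (K : Set X) : Prop :=
  ∀ x : ℕ → X, (∀ n, x n ∈ K) →
    ∃ m : ℕ → ℕ, StrictMono m ∧ WeaklyLpCauchy p (fun i => x (m i))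

end Defs

/-!
Since `{f' (x n)}` is relatively compact in operator norm, it suffices to prove
`f' (x n) h → f' x₀ h` for every `h`.

First, `f (c n) → f c₀` whenever `c` is `U`-bounded and weakly `p`-convergent to `c₀`. By
Hahn–Banach and the real mean value theorem, `‖f (c n) - f c₀‖ ≤ ‖f' (z n) (c n - c₀)‖` for
some `z n` on the segment `[c₀, c n]`. The sequence `z` is again weakly `p`-convergent to `c₀`,
so `{f' (z n)}` is a relatively compact set of compact operators, and such a set sends the
bounded weakly null sequence `c n - c₀` uniformly to `0`.

Second, uniform continuity of `f'` near `range x` makes `s • f' (x n) h` uniformly close to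
`f (x n + s • h) - f (x n)` for small `s > 0`, and by the first step the latter tends to
`f (x₀ + s • h) - f x₀`, which is close to `s • f' x₀ h`.
-/

section PConvergence

theorem MapClusterPt.eq_of_tendsto {α β : Type*} [TopologicalSpace β] [T2Space β] {l : Filter α}
    {u : α → β} {y z : β} (hy : MapClusterPt y l u) (hz : Tendsto u l (𝓝 z)) : y = z :=
  eq_of_nhds_neBot (Filter.NeBot.mono hy (inf_le_inf_left _ hz))

variable {X Y : Type*} [NormedAddCommGroup X] [NormedAddCommGroup Y]

section UBounded

variable {U A B : Set X}

theorem UBounded.mono (hB : UBounded U B) (hAB : A ⊆ B) : UBounded U A := by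
  obtain ⟨hBU, hBb, r, hr, hball⟩ := hB
  exact ⟨hAB.trans hBU, hBb.subset hAB, r, hr, fun a ha => hball a (hAB ha)⟩

theorem UBoundedSeq.union_singleton (hU : IsOpen U) {x : ℕ → X} {x₀ : X} (hx₀ : x₀ ∈ U)
    (hx : UBoundedSeq U x) : UBounded U (range x ∪ {x₀}) := by
  obtain ⟨hxU, hxb, r, hr, hball⟩ := hx
  obtain ⟨r₀, hr₀, hball₀⟩ := Metric.isOpen_iff.1 hU x₀ hx₀
  refine ⟨union_subset hxU (singleton_subset_iff.2 hx₀), hxb.union Bornology.isBounded_singleton,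
    min r r₀, lt_min hr hr₀, ?_⟩
  rintro b (hb | rfl)
  · exact (ball_subset_ball (min_le_left _ _)).trans (hball b hb)
  · exact (ball_subset_ball (min_le_right _ _)).trans hball₀

theorem UBounded.exists_thickening (hA : UBounded U A) :
    ∃ ρ > 0, UBounded U (thickening ρ A) := by
  obtain ⟨-, hAb, r, hr, hball⟩ := hA
  have hball' : ∀ b ∈ thickening (r / 2) A, ball b (r / 2) ⊆ U := by
    intro b hb y hy
    obtain ⟨a, ha, hba⟩ := mem_thickening_iff.1 hb
    exact hball a ha (by rw [mem_ball] at hy ⊢; linarith [dist_triangle y b a])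
  exact ⟨r / 2, half_pos hr, fun b hb => hball' b hb (mem_ball_self (half_pos hr)),
    hAb.thickening, r / 2, half_pos hr, hball'⟩

open scoped Pointwise in
theorem UBounded.convexHull [NormedSpace ℝ X] (hU : Convex ℝ U) (hB : UBounded U B) :
    UBounded U (_root_.convexHull ℝ B) := by
  obtain ⟨-, hBb, r, hr, hball⟩ := hB
  have hball' : ∀ b ∈ _root_.convexHull ℝ B, ball b r ⊆ U := by
    intro b hb
    have hsum : B + ball (0 : X) r ⊆ U := by
      rintro _ ⟨a, ha, v, hv, rfl⟩
      exact hball a ha (by simpa using hv)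
    calc ball b r = {b} + ball (0 : X) r := by simp
      _ ⊆ _root_.convexHull ℝ B + _root_.convexHull ℝ (ball (0 : X) r) := by
          gcongr
          · exact singleton_subset_iff.2 hb
          · exact subset_convexHull ℝ _
      _ = _root_.convexHull ℝ (B + ball (0 : X) r) := (convexHull_add _ _).symm
      _ ⊆ U := convexHull_min hsum hU
  exact ⟨fun b hb => hball' b hb (mem_ball_self hr), isBounded_convexHull.2 hBb, r, hr, hball'⟩

end UBounded

variable [NormedSpace ℝ X] [NormedSpace ℝ Y]

namespace WeaklyLpSummable

variable {p : ℝ≥0∞} {w : ℕ → X}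

theorem tendsto_zero (hp : p ≠ 0) (hw : WeaklyLpSummable p w) (g : X →L[ℝ] ℝ) :
    Tendsto (fun n => g (w n)) atTop (𝓝 0) := by
  have hgw := hw g
  split_ifs at hgw with htop
  · exact hgw
  have hpos : 0 < p.toReal := ENNReal.toReal_pos hp htop
  have hpow : Tendsto (fun n => ‖g (w n)‖ ^ p.toReal) atTop (𝓝 0) :=
    (hgw.summable hpos).tendsto_atTop_zero
  have hroot := (Real.continuousAt_rpow_const 0 p.toReal⁻¹
    (Or.inr (inv_nonneg.2 hpos.le))).tendsto.comp hpow
  rw [Real.zero_rpow (inv_ne_zero hpos.ne')] at hroot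
  refine tendsto_zero_iff_norm_tendsto_zero.2 (hroot.congr fun n => ?_)
  simp [hpos.ne']

theorem smul_of_abs_le_one (hw : WeaklyLpSummable p w) {t : ℕ → ℝ} (ht : ∀ n, |t n| ≤ 1) :
    WeaklyLpSummable p (fun n => t n • w n) := by
  intro g
  have hle : ∀ n, ‖g (t n • w n)‖ ≤ ‖g (w n)‖ := fun n => by
    simpa [abs_mul] using mul_le_of_le_one_left (abs_nonneg _) (ht n)
  have hgw := hw g
  split_ifs at hgw ⊢
  · exact squeeze_zero_norm hle (tendsto_zero_iff_norm_tendsto_zero.1 hgw)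
  · exact hgw.mono' hle

end WeaklyLpSummable

theorem exists_norm_image_sub_le_norm_fderiv_apply {f : X → Y} {f' : X → X →L[ℝ] Y} {a b : X}
    (hf : ∀ z ∈ segment ℝ a b, HasFDerivAt f (f' z) z) :
    ∃ t ∈ Icc (0 : ℝ) 1, ‖f b - f a‖ ≤ ‖f' (a + t • (b - a)) (b - a)‖ := by
  obtain ⟨g, hg, hgab⟩ := exists_dual_vector'' ℝ (f b - f a)
  set φ : ℝ → ℝ := fun t => g (f (a + t • (b - a)))
  have hφ : ∀ t ∈ Icc (0 : ℝ) 1, HasDerivAt φ (g (f' (a + t • (b - a)) (b - a))) t := by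
    intro t ht
    have hline : HasDerivAt (fun t : ℝ => a + t • (b - a)) (b - a) t := by
      simpa using ((hasDerivAt_id t).smul_const (b - a)).const_add a
    have hmem : a + t • (b - a) ∈ segment ℝ a b := by
      rw [segment_eq_image']; exact ⟨t, ht, rfl⟩
    exact g.hasFDerivAt.comp_hasDerivAt t ((hf _ hmem).comp_hasDerivAt t hline)
  obtain ⟨t, ht, hslope⟩ := exists_hasDerivAt_eq_slope φ _ zero_lt_one
    (fun t ht => (hφ t ht).continuousAt.continuousWithinAt)
    (fun t ht => hφ t (Ioo_subset_Icc_self ht))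
  refine ⟨t, Ioo_subset_Icc_self ht, ?_⟩
  calc ‖f b - f a‖ = g (f b - f a) := hgab.symm
    _ = (φ 1 - φ 0) / (1 - 0) := by simp [φ]
    _ = g (f' (a + t • (b - a)) (b - a)) := hslope.symm
    _ ≤ ‖g‖ * ‖f' (a + t • (b - a)) (b - a)‖ := (le_abs_self _).trans (g.le_opNorm _)
    _ ≤ ‖f' (a + t • (b - a)) (b - a)‖ := mul_le_of_le_one_left (norm_nonneg _) hg

section CompactOperator

variable {w : ℕ → X}

theorem IsCompactOperator.tendsto_apply_zero {T : X →L[ℝ] Y} (hT : IsCompactOperator T)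
    (hw : Bornology.IsBounded (range w))
    (hnull : ∀ g : X →L[ℝ] ℝ, Tendsto (fun n => g (w n)) atTop (𝓝 0)) :
    Tendsto (fun n => T (w n)) atTop (𝓝 0) := by
  obtain ⟨K, hK, hTK⟩ := hT.image_subset_compact_of_bounded hw
  refine hK.tendsto_nhds_of_unique_mapClusterPt
    (Eventually.of_forall fun n => hTK (mem_image_of_mem _ (mem_range_self n))) ?_
  intro y _ hy
  refine SeparatingDual.eq_zero_of_forall_dual_eq_zero (R := ℝ) fun g => ?_
  exact (hy.tendsto_comp g.continuous.continuousAt).eq_of_tendsto (hnull (g.comp T))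

theorem isClosed_setOf_tendsto_apply_zero (hw : Bornology.IsBounded (range w)) :
    IsClosed {T : X →L[ℝ] Y | Tendsto (fun n => T (w n)) atTop (𝓝 0)} := by
  obtain ⟨C, hC⟩ := hw.exists_norm_le
  have hlip : ∀ n, LipschitzWith C.toNNReal fun T : X →L[ℝ] Y => T (w n) := fun n =>
    (ContinuousLinearMap.lipschitz_apply (w n)).weaken
      (by simpa using Real.toNNReal_mono (hC _ (mem_range_self n)))
  exact (LipschitzWith.uniformEquicontinuous _ _ hlip).equicontinuous.isClosed_setOfPred_tendsto
    continuous_const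

theorem tendsto_apply_apply_zero_of_isCompact_closure {D : Set (X →L[ℝ] Y)}
    (hD : ∀ T ∈ D, IsCompactOperator T) (hDc : IsCompact (closure D))
    {S : ℕ → X →L[ℝ] Y} (hS : ∀ n, S n ∈ D)
    (hw : Bornology.IsBounded (range w))
    (hnull : ∀ g : X →L[ℝ] ℝ, Tendsto (fun n => g (w n)) atTop (𝓝 0)) :
    Tendsto (fun n => S n (w n)) atTop (𝓝 0) := by
  have hclosure : ∀ T ∈ closure D, Tendsto (fun n => T (w n)) atTop (𝓝 0) :=
    (isClosed_setOf_tendsto_apply_zero hw).closure_subset_iff.2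
      fun T hT => (hD T hT).tendsto_apply_zero hw hnull
  obtain ⟨C, hC⟩ := hw.exists_norm_le
  refine tendsto_of_subseq_tendsto fun ns hns => ?_
  obtain ⟨T, hT, φ, hφ, hST⟩ := hDc.isSeqCompact fun k => subset_closure (hS (ns k))
  have hbound : ∀ k, ‖S (ns (φ k)) (w (ns (φ k)))‖
      ≤ ‖S (ns (φ k)) - T‖ * C + ‖T (w (ns (φ k)))‖ := fun k =>
    calc ‖S (ns (φ k)) (w (ns (φ k)))‖
          = ‖(S (ns (φ k)) - T) (w (ns (φ k))) + T (w (ns (φ k)))‖ := by simp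
      _ ≤ ‖S (ns (φ k)) - T‖ * C + ‖T (w (ns (φ k)))‖ := by
        refine (norm_add_le _ _).trans (add_le_add_left ?_ _)
        exact ((S (ns (φ k)) - T).le_opNorm _).trans
          (mul_le_mul_of_nonneg_left (hC _ (mem_range_self _)) (norm_nonneg _))
  have hnorm : Tendsto (fun k => ‖S (ns (φ k)) - T‖) atTop (𝓝 0) :=
    tendsto_iff_norm_sub_tendsto_zero.1 hST
  refine ⟨φ, squeeze_zero_norm hbound ?_⟩
  simpa using (hnorm.mul_const C).add ((hclosure T hT).comp (hns.comp hφ.tendsto_atTop)).norm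

end CompactOperator

theorem ContinuousLinearMap.tendsto_of_tendsto_apply_of_isCompact {ι : Type*} {l : Filter ι}
    {T : ι → X →L[ℝ] Y} {T₀ : X →L[ℝ] Y} {K : Set (X →L[ℝ] Y)} (hK : IsCompact K)
    (hTK : ∀ᶠ i in l, T i ∈ K) (hT : ∀ v, Tendsto (fun i => T i v) l (𝓝 (T₀ v))) :
    Tendsto T l (𝓝 T₀) :=
  hK.tendsto_nhds_of_unique_mapClusterPt hTK fun _ _ hS => ContinuousLinearMap.ext fun v =>
    (hS.tendsto_comp (ContinuousLinearMap.apply ℝ Y v).continuous.continuousAt).eq_of_tendsto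
      (hT v)

/-- `f'` maps `U`-bounded weakly `p`-compact sets, encoded as ranges of weakly `p`-convergent
sequences together with their limits, to relatively compact subsets of `K(X,Y)`. -/
def DerivCompactOnWeaklyPConvergent (p : ℝ≥0∞) (U : Set X) (f' : X → X →L[ℝ] Y) : Prop :=
  ∀ (c : ℕ → X) (c₀ : X), c₀ ∈ U → UBounded U (range c ∪ {c₀}) →
    WeaklyLpConvergentTo p c c₀ →
    (∀ z ∈ range c ∪ {c₀}, IsCompactOperator (f' z)) ∧
    IsCompact (closure (f' '' (range c ∪ {c₀})))

variable {p : ℝ≥0∞} {U : Set X} {f : X → Y} {f' : X → X →L[ℝ] Y}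

open scoped Pointwise in
theorem tendsto_comp_of_weaklyLpConvergentTo (hp : p ≠ 0) (hUc : Convex ℝ U)
    (hf : ∀ x ∈ U, HasFDerivAt f (f' x) x) (H : DerivCompactOnWeaklyPConvergent p U f')
    {c : ℕ → X} {c₀ : X} (hc : UBounded U (range c ∪ {c₀}))
    (hconv : WeaklyLpConvergentTo p c c₀) :
    Tendsto (fun n => f (c n)) atTop (𝓝 (f c₀)) := by
  have hc₀ : c₀ ∈ U := hc.1 (Or.inr rfl)
  have hseg : ∀ n, segment ℝ c₀ (c n) ⊆ U := fun n =>
    hUc.segment_subset hc₀ (hc.1 (Or.inl (mem_range_self n)))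
  choose t ht hmv using fun n =>
    exists_norm_image_sub_le_norm_fderiv_apply fun z hz => hf z (hseg n hz)
  set z : ℕ → X := fun n => c₀ + t n • (c n - c₀)
  have hz : UBounded U (range z ∪ {c₀}) := by
    refine (hc.convexHull hUc).mono (union_subset (range_subset_iff.2 fun n => ?_)
      (singleton_subset_iff.2 (subset_convexHull ℝ _ (Or.inr rfl))))
    have hzn : z n ∈ segment ℝ c₀ (c n) := by
      rw [segment_eq_image']
      exact ⟨t n, ht n, rfl⟩
    exact segment_subset_convexHull (mem_union_right _ (mem_singleton c₀))
      (mem_union_left _ (mem_range_self n)) hzn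
  have hzconv : WeaklyLpConvergentTo p z c₀ := by
    simpa [WeaklyLpConvergentTo, z] using
      hconv.smul_of_abs_le_one fun n => abs_le.2 ⟨by linarith [(ht n).1], (ht n).2⟩
  obtain ⟨hcompact, hclosure⟩ := H z c₀ hc₀ hz hzconv
  have hw : Bornology.IsBounded (range fun n => c n - c₀) :=
    (isBounded_sub hc.2.1 hc.2.1).subset (range_subset_iff.2 fun n =>
      sub_mem_sub (Or.inl (mem_range_self n)) (Or.inr rfl))
  have hnull : Tendsto (fun n => f' (z n) (c n - c₀)) atTop (𝓝 0) :=
    tendsto_apply_apply_zero_of_isCompact_closure (forall_mem_image.2 hcompact) hclosure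
      (fun n => mem_image_of_mem f' (Or.inl (mem_range_self n))) hw (hconv.tendsto_zero hp)
  refine tendsto_iff_norm_sub_tendsto_zero.2 (squeeze_zero (fun n => norm_nonneg _) hmv ?_)
  simpa using hnull.norm

theorem C1u.exists_forall_norm_image_sub_sub_le {A : Set X} (hf : C1u U f f')
    (hA : UBounded U A) {ε : ℝ} (hε : 0 < ε) :
    ∃ δ > 0, ∀ z ∈ A, ∀ v : X, ‖v‖ < δ → ‖f (z + v) - f z - f' z v‖ ≤ ε * ‖v‖ := by
  obtain ⟨ρ, hρ, hB⟩ := hA.exists_thickening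
  obtain ⟨δ, hδ, hδf'⟩ := Metric.uniformContinuousOn_iff.1 (hf.2 _ hB) ε hε
  refine ⟨min ρ δ, lt_min hρ hδ, fun z hz v hv => ?_⟩
  have hball : ball z (min ρ δ) ⊆ thickening ρ A := fun y hy =>
    mem_thickening_iff.2 ⟨z, hz, (mem_ball.1 hy).trans_le (min_le_left _ _)⟩
  have hderiv : ∀ y ∈ ball z (min ρ δ), HasFDerivWithinAt f (f' y) (ball z (min ρ δ)) y :=
    fun y hy => (hf.1 y (hB.1 (hball hy))).hasFDerivWithinAt
  have hclose : ∀ y ∈ ball z (min ρ δ), ‖f' y - f' z‖ ≤ ε := fun y hy => by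
    rw [← dist_eq_norm]
    exact (hδf' y (hball hy) z (self_subset_thickening hρ A hz)
      ((mem_ball.1 hy).trans_le (min_le_right _ _))).le
  simpa using (convex_ball z _).norm_image_sub_le_of_norm_hasFDerivWithin_le' hderiv hclose
    (mem_ball_self (lt_min hρ hδ)) (show z + v ∈ ball z (min ρ δ) by simpa using hv)

theorem norm_apply_sub_apply_le_of_increments (f : X → Y) (L M : X →L[ℝ] Y) (a b v : X) :
    ‖L v - M v‖ ≤ ‖(f (a + v) - f a) - (f (b + v) - f b)‖
      + ‖f (a + v) - f a - L v‖ + ‖f (b + v) - f b - M v‖ :=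
  calc ‖L v - M v‖ = ‖((f (a + v) - f a) - (f (b + v) - f b))
        - (f (a + v) - f a - L v) + (f (b + v) - f b - M v)‖ := by congr 1; abel
    _ ≤ _ := (norm_add_le _ _).trans (add_le_add_left (norm_sub_le _ _) _)

theorem tendsto_fderiv_apply_of_weaklyLpConvergentTo (hp : p ≠ 0) (hUc : Convex ℝ U)
    (hf : C1u U f f') (H : DerivCompactOnWeaklyPConvergent p U f') {x : ℕ → X} {x₀ : X}
    (hx : UBounded U (range x ∪ {x₀})) (hconv : WeaklyLpConvergentTo p x x₀) (h : X) :
    Tendsto (fun n => f' (x n) h) atTop (𝓝 (f' x₀ h)) := by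
  obtain ⟨ρ, hρ, hB⟩ := hx.exists_thickening
  have hshift : ∀ v : X, ‖v‖ < ρ → Tendsto (fun n => f (x n + v)) atTop (𝓝 (f (x₀ + v))) := by
    intro v hv
    refine tendsto_comp_of_weaklyLpConvergentTo hp hUc hf.1 H (hB.mono ?_)
      (by simpa [WeaklyLpConvergentTo] using hconv)
    rintro _ (⟨n, rfl⟩ | rfl)
    · exact mem_thickening_iff.2 ⟨x n, Or.inl (mem_range_self n), by simpa using hv⟩
    · exact mem_thickening_iff.2 ⟨x₀, Or.inr rfl, by simpa using hv⟩
  rw [Metric.tendsto_atTop]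
  intro ε hε
  set η := ε / (4 * (‖h‖ + 1))
  have hη : 0 < η := by positivity
  have hηh : 2 * (η * ‖h‖) ≤ ε / 2 := by
    have : η * (‖h‖ + 1) = ε / 4 := by simp only [η]; field_simp
    nlinarith
  obtain ⟨δ, hδ, htaylor⟩ := hf.exists_forall_norm_image_sub_sub_le hx hη
  set s := min ρ δ / (‖h‖ + 1)
  have hs : 0 < s := by positivity
  set v := s • h
  have hv : ‖v‖ = s * ‖h‖ := by rw [norm_smul, Real.norm_of_nonneg hs.le]
  have hvρδ : ‖v‖ < min ρ δ := by
    rw [hv, div_mul_eq_mul_div, div_lt_iff₀ (by positivity)]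
    nlinarith [lt_min hρ hδ]
  have hdiff := (hshift v (hvρδ.trans_le (min_le_left _ _))).sub (hshift 0 (by simpa using hρ))
  simp only [add_zero] at hdiff
  obtain ⟨N, hN⟩ := Metric.tendsto_atTop.1 hdiff (s * (ε / 2)) (by positivity)
  refine ⟨N, fun n hn => ?_⟩
  have hxn := htaylor (x n) (Or.inl (mem_range_self n)) v (hvρδ.trans_le (min_le_right _ _))
  have hx₀ := htaylor x₀ (Or.inr rfl) v (hvρδ.trans_le (min_le_right _ _))
  have hbound : s * ‖f' (x n) h - f' x₀ h‖ < s * ε :=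
    calc s * ‖f' (x n) h - f' x₀ h‖ = ‖f' (x n) v - f' x₀ v‖ := by
          rw [map_smul, map_smul, ← smul_sub, norm_smul, Real.norm_of_nonneg hs.le]
      _ ≤ _ := norm_apply_sub_apply_le_of_increments f (f' (x n)) (f' x₀) (x n) x₀ v
      _ < s * (ε / 2) + η * ‖v‖ + η * ‖v‖ := by
          rw [← dist_eq_norm]
          exact add_lt_add_of_lt_of_le (add_lt_add_of_lt_of_le (hN n hn) hxn) hx₀
      _ ≤ s * ε := by nlinarith
  rw [dist_eq_norm]
  exact lt_of_mul_lt_mul_left hbound hs.le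

end PConvergence

theorem deriv_compact_imp_deriv_pConvergent_general
    {X Y : Type*} [NormedAddCommGroup X] [NormedSpace ℝ X]
    [NormedAddCommGroup Y] [NormedSpace ℝ Y]
    (p : ℝ≥0∞) (hp : 1 ≤ p)
    (U : Set X) (hU : IsOpen U) (hUc : Convex ℝ U)
    (f : X → Y) (f' : X → X →L[ℝ] Y) (hf : C1u U f f')
    (H : ∀ (c : ℕ → X) (c₀ : X), c₀ ∈ U → UBounded U (Set.range c ∪ {c₀}) →
      WeaklyLpConvergentTo p c c₀ →
      (∀ z ∈ Set.range c ∪ {c₀}, IsCompactOperator (f' z)) ∧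
      IsCompact (closure (f' '' (Set.range c ∪ {c₀})))) :
    ∀ (x : ℕ → X) (x₀ : X), x₀ ∈ U → UBoundedSeq U x →
      WeaklyLpConvergentTo p x x₀ →
      Filter.Tendsto (fun n => f' (x n)) Filter.atTop (nhds (f' x₀)) := by
  intro x x₀ hx₀ hx hconv
  have hM : UBounded U (range x ∪ {x₀}) := hx.union_singleton hU hx₀
  have hfx : ∀ n, f' (x n) ∈ closure (f' '' (range x ∪ {x₀})) := fun n =>
    subset_closure (mem_image_of_mem f' (Or.inl (mem_range_self n)))
  exact ContinuousLinearMap.tendsto_of_tendsto_apply_of_isCompact (H x x₀ hx₀ hM hconv).2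
    (Eventually.of_forall hfx) fun h => tendsto_fderiv_apply_of_weaklyLpConvergentTo
      (zero_lt_one.trans_le hp).ne' hUc hf H hM hconv h

/-- If `f'` maps `U`-bounded weakly `p`-compact subsets of `U` into relatively compact
subsets of `K(X,Y)`, then `f' : U → K(X,Y)` is `p`-convergent: for every `U`-bounded
sequence weakly `p`-convergent to `x₀ ∈ U`, `f'(x n) → f'(x₀)` in operator norm. -/
theorem deriv_compact_imp_deriv_pConvergent
    {X Y : Type*} [NormedAddCommGroup X] [NormedSpace ℝ X] [CompleteSpace X]
    [NormedAddCommGroup Y] [NormedSpace ℝ Y] [CompleteSpace Y]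
    (p : ℝ≥0∞) (hp : 1 ≤ p) (hp' : p ≠ ⊤)
    (U : Set X) (hU : IsOpen U) (hUc : Convex ℝ U)
    (f : X → Y) (f' : X → X →L[ℝ] Y) (hf : C1u U f f')
    (H : ∀ (c : ℕ → X) (c₀ : X), c₀ ∈ U → UBounded U (Set.range c ∪ {c₀}) →
      WeaklyLpConvergentTo p c c₀ →
      (∀ z ∈ Set.range c ∪ {c₀}, IsCompactOperator (f' z)) ∧
      IsCompact (closure (f' '' (Set.range c ∪ {c₀})))) :
    ∀ (x : ℕ → X) (x₀ : X), x₀ ∈ U → UBoundedSeq U x →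
      WeaklyLpConvergentTo p x x₀ →
      Filter.Tendsto (fun n => f' (x n)) Filter.atTop (nhds (f' x₀)) :=
  deriv_compact_imp_deriv_pConvergent_general p hp U hU hUc f f' hf H
end

section
/- Suppose every continuous linear functional is considered as an operator in K(X,ℝ), B_X is weakly p-precompact, U ⊆ X is open convex, f ∈ C^{1u}(U,ℝ) is weakly p-sequentially continuous, and every uniformly p-convergent subset of K(X,ℝ) = X* is uniformly completely continuous (an (L)-set). Then f′ maps U-bounded subsets of U into relatively compact subsets of X*. -/
open Filter Topology Metric Set
open scoped ENNReal NNReal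

/-!
Take a sequence in `f' '' B`, choose preimages in `B` and, `B` being bounded, pass to a weakly
`p`-Cauchy subsequence `w`. Uniformly on `U`-bounded sets, `f' w y` is the difference quotient
`(f (w + t • y) - f w) / t` up to a small error (mean value inequality and uniform continuity of
`f'`). Weak `p`-sequential continuity of `f` then shows that `f' (w n) h` is Cauchy for every `h`
and that `f' (w n) (z n) → 0` for every weakly `p`-summable `z`, which makes `{f' (w n)}`
uniformly `p`-convergent. A pointwise Cauchy sequence of operators with uniformly `p`-convergent
range is norm Cauchy as soon as the unit ball is weakly `p`-precompact: test it on a weakly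
`p`-Cauchy subsequence of almost norming vectors. So `f' '' B` is totally bounded.
-/

namespace Memℓp

variable {E : Type*} [NormedAddCommGroup E] {p : ℝ≥0∞}

theorem comp_injective {α β : Type*} {f : α → E} (hf : Memℓp f p) {e : β → α}
    (he : Function.Injective e) : Memℓp (f ∘ e) p := by
  obtain rfl | rfl | hp := p.trichotomy
  · rw [memℓp_zero_iff] at hf ⊢
    exact hf.preimage he.injOn
  · rw [memℓp_infty_iff] at hf ⊢
    exact hf.mono (range_comp_subset_range e fun i => ‖f i‖)
  · rw [memℓp_gen_iff hp] at hf ⊢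
    exact hf.comp_injective he

-- Raising the exponent to `max p 1` also covers `p = 0`, where `Memℓp` means finite support.
theorem tendsto_atTop_zero {f : ℕ → E} (hf : Memℓp f p) (hp : p ≠ ⊤) :
    Tendsto f atTop (𝓝 0) := by
  set q := max p 1
  have hq : 0 < q.toReal :=
    ENNReal.toReal_pos (by positivity) (max_ne_top hp ENNReal.one_ne_top)
  have hsum := ((hf.of_exponent_ge (le_max_left p 1)).summable hq).tendsto_atTop_zero
  have := hsum.rpow_const (p := q.toReal⁻¹) (Or.inr (by positivity))
  simp only [Real.zero_rpow (inv_ne_zero hq.ne'),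
    fun n => Real.rpow_rpow_inv (norm_nonneg (f n)) hq.ne'] at this
  exact tendsto_zero_iff_norm_tendsto_zero.2 this

end Memℓp

theorem exists_strictMono_comp_pair {a b : ℕ → ℕ} (ha : Tendsto a atTop atTop)
    (hb : Tendsto b atTop atTop) :
    ∃ φ : ℕ → ℕ, StrictMono φ ∧ StrictMono (a ∘ φ) ∧ StrictMono (b ∘ φ) := by
  obtain ⟨φ, hφ, haφ⟩ := strictMono_subseq_of_tendsto_atTop ha
  obtain ⟨ψ, hψ, hbψ⟩ := strictMono_subseq_of_tendsto_atTop (hb.comp hφ.tendsto_atTop)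
  exact ⟨φ ∘ ψ, hφ.comp hψ, haφ.comp hψ, hbψ⟩

theorem exists_strictMono_pair {P : ℕ → ℕ → Prop} (h : ∀ N, ∃ i ≥ N, ∃ j ≥ N, P i j) :
    ∃ a b : ℕ → ℕ, StrictMono a ∧ StrictMono b ∧ ∀ n, P (a n) (b n) := by
  choose i hi j hj hP using h
  obtain ⟨φ, -, hiφ, hjφ⟩ := exists_strictMono_comp_pair
    (tendsto_atTop_mono hi tendsto_id) (tendsto_atTop_mono hj tendsto_id)
  exact ⟨i ∘ φ, j ∘ φ, hiφ, hjφ, fun n => hP (φ n)⟩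

theorem cauchySeq_of_forall_exists_cauchySeq_dist_le {α : Type*} [PseudoMetricSpace α]
    {u : ℕ → α} (h : ∀ ε > 0, ∃ v : ℕ → α, CauchySeq v ∧ ∀ n, dist (u n) (v n) ≤ ε) :
    CauchySeq u := by
  refine Metric.cauchySeq_iff'.2 fun ε hε => ?_
  obtain ⟨v, hv, huv⟩ := h (ε / 3) (by positivity)
  obtain ⟨N, hN⟩ := Metric.cauchySeq_iff'.1 hv (ε / 3) (by positivity)
  refine ⟨N, fun n hn => ?_⟩
  calc dist (u n) (u N) ≤ dist (u n) (v n) + dist (v n) (v N) + dist (v N) (u N) :=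
        dist_triangle4 _ _ _ _
    _ < ε := by linarith [huv n, huv N, hN n hn, dist_comm (v N) (u N)]

theorem totallyBounded_of_forall_exists_cauchySeq {α : Type*} [UniformSpace α] {s : Set α}
    (h : ∀ u : ℕ → α, (∀ n, u n ∈ s) → ∃ φ : ℕ → ℕ, StrictMono φ ∧ CauchySeq (u ∘ φ)) :
    TotallyBounded s := by
  intro V V_in
  by_contra! hV
  obtain ⟨u, u_in, hu⟩ : ∃ u : ℕ → α, (∀ n, u n ∈ s) ∧
      ∀ n m, m < n → u m ∉ UniformSpace.ball (u n) V := by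
    simp only [not_subset, mem_iUnion₂, not_exists, exists_prop] at hV
    simpa only [forall_and, forall_mem_image, not_and] using! seq_of_forall_finite_exists hV
  obtain ⟨φ, hφ, huφ⟩ := h u u_in
  obtain ⟨N, hN⟩ := huφ.mem_entourage V_in
  exact hu (φ (N + 1)) (φ N) (hφ (Nat.lt_add_one N)) (hN (N + 1) N N.le_succ le_rfl)

theorem isBounded_range_of_forall_isBounded_range_apply {𝕜 E ι : Type*} [RCLike 𝕜]
    [NormedAddCommGroup E] [NormedSpace 𝕜 E] {x : ι → E}
    (h : ∀ φ : StrongDual 𝕜 E, Bornology.IsBounded (range fun i => φ (x i))) :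
    Bornology.IsBounded (range x) := by
  obtain ⟨C, hC⟩ := banach_steinhaus (g := fun i => NormedSpace.inclusionInDoubleDualLi 𝕜 (x i))
    fun φ => by
      obtain ⟨C, hC⟩ := isBounded_iff_forall_norm_le.1 (h φ)
      exact ⟨C, fun i => hC _ ⟨i, rfl⟩⟩
  exact isBounded_iff_forall_norm_le.2 ⟨C, forall_mem_range.2 fun i =>
    (NormedSpace.inclusionInDoubleDualLi 𝕜).norm_map (x i) ▸ hC i⟩

section Weakly

variable {X : Type*} [NormedAddCommGroup X] [NormedSpace ℝ X] {p : ℝ≥0∞} {x y : ℕ → X}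

theorem weaklyLpSummable_iff (hp : p ≠ ⊤) :
    WeaklyLpSummable p x ↔ ∀ φ : X →L[ℝ] ℝ, Memℓp (fun n => φ (x n)) p := by
  simp only [WeaklyLpSummable, if_neg hp]

namespace WeaklyLpSummable

theorem tendsto_apply (hp : p ≠ ⊤) (hx : WeaklyLpSummable p x) (φ : X →L[ℝ] ℝ) :
    Tendsto (fun n => φ (x n)) atTop (𝓝 0) :=
  ((weaklyLpSummable_iff hp).1 hx φ).tendsto_atTop_zero hp

theorem isBounded_range (hp : p ≠ ⊤) (hx : WeaklyLpSummable p x) :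
    Bornology.IsBounded (range x) :=
  isBounded_range_of_forall_isBounded_range_apply (𝕜 := ℝ) fun φ =>
    Metric.isBounded_range_of_tendsto _ (hx.tendsto_apply hp φ)

theorem comp_injective (hp : p ≠ ⊤) (hx : WeaklyLpSummable p x) {e : ℕ → ℕ}
    (he : Function.Injective e) : WeaklyLpSummable p (x ∘ e) :=
  (weaklyLpSummable_iff hp).2 fun φ => ((weaklyLpSummable_iff hp).1 hx φ).comp_injective he

theorem add (hp : p ≠ ⊤) (hx : WeaklyLpSummable p x) (hy : WeaklyLpSummable p y) :
    WeaklyLpSummable p fun n => x n + y n :=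
  (weaklyLpSummable_iff hp).2 fun φ => by
    simp only [map_add]
    exact ((weaklyLpSummable_iff hp).1 hx φ).add ((weaklyLpSummable_iff hp).1 hy φ)

theorem const_smul (hp : p ≠ ⊤) (hx : WeaklyLpSummable p x) (c : ℝ) :
    WeaklyLpSummable p fun n => c • x n :=
  (weaklyLpSummable_iff hp).2 fun φ => by
    simpa only [map_smul, smul_eq_mul] using
      ((weaklyLpSummable_iff hp).1 hx φ).const_mul c

theorem indicator (hp : p ≠ ⊤) (hx : WeaklyLpSummable p x) (S : Set ℕ) :
    WeaklyLpSummable p (S.indicator x) :=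
  (weaklyLpSummable_iff hp).2 fun φ =>
    ((weaklyLpSummable_iff hp).1 hx φ).mono' fun n => by by_cases hn : n ∈ S <;> simp [hn]

end WeaklyLpSummable

namespace WeaklyLpCauchy

theorem comp_strictMono (hx : WeaklyLpCauchy p x) {σ : ℕ → ℕ} (hσ : StrictMono σ) :
    WeaklyLpCauchy p (x ∘ σ) :=
  fun m k hm hk => hx (σ ∘ m) (σ ∘ k) (hσ.comp hm) (hσ.comp hk)

theorem add_const (hx : WeaklyLpCauchy p x) (c : X) : WeaklyLpCauchy p fun n => x n + c :=
  fun m k hm hk => by simpa only [add_sub_add_right_eq_sub] using hx m k hm hk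

theorem const_smul (hp : p ≠ ⊤) (hx : WeaklyLpCauchy p x) (c : ℝ) :
    WeaklyLpCauchy p fun n => c • x n :=
  fun m k hm hk => by simpa only [smul_sub] using (hx m k hm hk).const_smul hp c

theorem add_weaklyLpSummable (hp : p ≠ ⊤) (hx : WeaklyLpCauchy p x)
    (hy : WeaklyLpSummable p y) : WeaklyLpCauchy p fun n => x n + y n := fun m k hm hk => by
  have := (hx m k hm hk).add hp ((hy.comp_injective hp hm.injective).add hp
    ((hy.comp_injective hp hk.injective).const_smul hp (-1)))
  convert this using 1
  ext n
  simp only [Function.comp_apply]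
  module

end WeaklyLpCauchy

theorem WeaklyPPrecompact.of_isBounded (hp : p ≠ ⊤)
    (hball : WeaklyPPrecompact p (closedBall (0 : X) 1)) {B : Set X}
    (hB : Bornology.IsBounded B) : WeaklyPPrecompact p B := by
  obtain ⟨R, hR₀, hR⟩ := hB.exists_pos_norm_le
  intro x hx
  obtain ⟨m, hm, hxm⟩ := hball (R⁻¹ • x) fun n => by
    simpa [norm_smul, abs_of_pos hR₀, inv_mul_le_iff₀ hR₀] using hR _ (hx n)
  refine ⟨m, hm, ?_⟩
  simpa [smul_smul, hR₀.ne'] using hxm.const_smul hp R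

end Weakly

section UBounded

variable {X : Type*} [NormedAddCommGroup X] {U B B' : Set X} {r : ℝ}

theorem UBounded.mono_s16 (h : UBounded U B) (hsub : B' ⊆ B) : UBounded U B' := by
  obtain ⟨hU, hb, r, hr, hball⟩ := h
  exact ⟨hsub.trans hU, hb.subset hsub, r, hr, fun b hb => hball b (hsub hb)⟩

theorem UBounded.union (h : UBounded U B) (h' : UBounded U B') : UBounded U (B ∪ B') := by
  obtain ⟨hU, hb, r, hr, hball⟩ := h
  obtain ⟨hU', hb', r', hr', hball'⟩ := h'
  refine ⟨union_subset hU hU', hb.union hb', min r r', lt_min hr hr', ?_⟩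
  rintro b (hb | hb)
  · exact (ball_subset_ball (min_le_left _ _)).trans (hball b hb)
  · exact (ball_subset_ball (min_le_right _ _)).trans (hball' b hb)

theorem UBounded.exists_thickening_s16 (h : UBounded U B) :
    ∃ r > 0, UBounded U (thickening r B) := by
  obtain ⟨-, hb, r, hr, hball⟩ := h
  have hsub : ∀ y ∈ thickening (r / 2) B, ball y (r / 2) ⊆ U := by
    intro y hy
    obtain ⟨b, hb, hyb⟩ := mem_thickening_iff.1 hy
    exact (ball_subset_ball' (by linarith)).trans (hball b hb)
  exact ⟨r / 2, half_pos hr, fun y hy => hsub y hy (mem_ball_self (half_pos hr)),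
    hb.thickening, r / 2, half_pos hr, hsub⟩

theorem add_mem_thickening {w u : X} (hw : w ∈ B) (hu : ‖u‖ < r) : w + u ∈ thickening r B :=
  mem_thickening_iff.2 ⟨w, hw, by rwa [dist_eq_norm, add_sub_cancel_left]⟩

end UBounded

namespace C1u

variable {X Y : Type*} [NormedAddCommGroup X] [NormedSpace ℝ X] [NormedAddCommGroup Y]
  [NormedSpace ℝ Y] {U B : Set X} {r : ℝ} {f : X → Y} {f' : X → X →L[ℝ] Y}

theorem exists_norm_sub_sub_le (hf : C1u U f f') (hB : UBounded U (thickening r B))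
    (hr : 0 < r) {ε : ℝ} (hε : 0 < ε) :
    ∃ δ > 0, δ ≤ r ∧ ∀ w ∈ B, ∀ u : X, ‖u‖ < δ → ‖f (w + u) - f w - f' w u‖ ≤ ε * ‖u‖ := by
  obtain ⟨η, hη, hf'⟩ := Metric.uniformContinuousOn_iff.1 (hf.2 _ hB) ε hε
  refine ⟨min η r, lt_min hη hr, min_le_right _ _, fun w hw u hu => ?_⟩
  have hball : ball w (min η r) ⊆ thickening r B := fun y hy =>
    mem_thickening_iff.2 ⟨w, hw, (mem_ball.1 hy).trans_le (min_le_right _ _)⟩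
  have hw' : w ∈ ball w (min η r) := mem_ball_self (lt_min hη hr)
  have hbound : ∀ y ∈ ball w (min η r), ‖f' y - f' w‖ ≤ ε := fun y hy => by
    rw [← dist_eq_norm]
    exact (hf' y (hball hy) w (hball hw') ((mem_ball.1 hy).trans_le (min_le_left _ _))).le
  have := (convex_ball w (min η r)).norm_image_sub_le_of_norm_hasFDerivWithin_le'
    (fun y hy => (hf.1 y (hB.1 (hball hy))).hasFDerivWithinAt) hbound hw'
    (mem_ball.2 (by rwa [dist_eq_norm, add_sub_cancel_left]))
  rwa [add_sub_cancel_left] at this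

theorem exists_norm_apply_sub_slope_le (hf : C1u U f f') (hB : UBounded U (thickening r B))
    (hr : 0 < r) {M ε : ℝ} (hM : 0 ≤ M) (hε : 0 < ε) :
    ∃ t > (0 : ℝ), ∀ w ∈ B, ∀ y : X, ‖y‖ ≤ M →
      w + t • y ∈ thickening r B ∧ ‖f' w y - t⁻¹ • (f (w + t • y) - f w)‖ ≤ ε := by
  obtain ⟨δ, hδ, hδr, hδf⟩ := hf.exists_norm_sub_sub_le hB hr (ε := ε / (M + 1)) (by positivity)
  refine ⟨δ / (M + 1), by positivity, fun w hw y hy => ?_⟩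
  set t := δ / (M + 1)
  have ht : 0 < t := by positivity
  have hty : ‖t • y‖ < δ := by
    rw [norm_smul, Real.norm_of_nonneg ht.le]
    calc t * ‖y‖ ≤ t * M := by gcongr
      _ < t * (M + 1) := by gcongr; linarith
      _ = δ := div_mul_cancel₀ _ (by positivity)
  refine ⟨add_mem_thickening hw (hty.trans_le hδr), ?_⟩
  have hslope : f' w y - t⁻¹ • (f (w + t • y) - f w) =
      -t⁻¹ • (f (w + t • y) - f w - f' w (t • y)) := by
    rw [map_smul, smul_sub, smul_sub, smul_smul, neg_mul, inv_mul_cancel₀ ht.ne']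
    module
  calc ‖f' w y - t⁻¹ • (f (w + t • y) - f w)‖
      = t⁻¹ * ‖f (w + t • y) - f w - f' w (t • y)‖ := by
        rw [hslope, norm_smul, norm_neg, Real.norm_of_nonneg (inv_nonneg.2 ht.le)]
    _ ≤ t⁻¹ * (ε / (M + 1) * ‖t • y‖) := by gcongr; exact hδf w hw _ hty
    _ = ε / (M + 1) * ‖y‖ := by
        rw [norm_smul, Real.norm_of_nonneg ht.le]; field_simp
    _ ≤ ε := by
        rw [div_mul_eq_mul_div, div_le_iff₀ (by positivity)]
        nlinarith

end C1u

section SequentialContinuity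

variable {X Y : Type*} [NormedAddCommGroup X] [NormedSpace ℝ X] [NormedAddCommGroup Y]
  {p : ℝ≥0∞} {U : Set X} {f : X → Y} {w : ℕ → X}

namespace WeaklyPSeqCont

variable {x d : ℕ → X}

-- Adding `d` only on `S` keeps the sequence weakly `p`-Cauchy, and off `S` it agrees with `x`,
-- so both images under `f` have the same limit.
theorem tendsto_add_indicator_sub (hp : p ≠ ⊤) (hf : WeaklyPSeqCont p U f)
    (hx : UBoundedSeq U x) (hxd : UBoundedSeq U fun n => x n + d n) (hxc : WeaklyLpCauchy p x)
    (hd : WeaklyLpSummable p d) {S : Set ℕ} {a : ℕ → ℕ} (ha : StrictMono a)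
    (haS : ∀ n, a n ∉ S) :
    Tendsto (fun n => f (x n + S.indicator d n) - f (x n)) atTop (𝓝 0) := by
  have hrange : range (fun n => x n + S.indicator d n) ⊆ range x ∪ range fun n => x n + d n := by
    rintro _ ⟨n, rfl⟩
    by_cases hn : n ∈ S
    · exact Or.inr ⟨n, by simp [hn]⟩
    · exact Or.inl ⟨n, by simp [hn]⟩
  obtain ⟨l, hl⟩ := hf _ ((hx.union hxd).mono_s16 hrange)
    (hxc.add_weaklyLpSummable hp (hd.indicator hp S))
  obtain ⟨l', hl'⟩ := hf x hx hxc
  have hlim := hl.sub hl'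
  have hll' : l - l' = 0 :=
    tendsto_nhds_unique (hlim.comp ha.tendsto_atTop) (by simp [Function.comp_def, haS])
  rwa [hll'] at hlim

theorem tendsto_add_sub (hp : p ≠ ⊤) (hf : WeaklyPSeqCont p U f) (hx : UBoundedSeq U x)
    (hxd : UBoundedSeq U fun n => x n + d n) (hxc : WeaklyLpCauchy p x)
    (hd : WeaklyLpSummable p d) :
    Tendsto (fun n => f (x n + d n) - f (x n)) atTop (𝓝 0) := by
  have heven := hf.tendsto_add_indicator_sub hp hx hxd hxc hd (S := {n | Even n})
    (a := fun n => 2 * n + 1) (fun m n h => by dsimp; omega) fun n => Nat.not_even_two_mul_add_one n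
  have hodd := hf.tendsto_add_indicator_sub hp hx hxd hxc hd (S := {n | Even n}ᶜ)
    (a := fun n => 2 * n) (fun m n h => by dsimp; omega) fun n => by simp
  rw [← add_zero (0 : Y)]
  refine (heven.add hodd).congr fun n => ?_
  by_cases hn : Even n <;> simp [hn]

end WeaklyPSeqCont

variable [NormedSpace ℝ Y] {f' : X → X →L[ℝ] Y}

namespace C1u

theorem cauchySeq_apply (hf : C1u U f f') (hwsc : WeaklyPSeqCont p U f) (hw : UBoundedSeq U w)
    (hwc : WeaklyLpCauchy p w) (h : X) : CauchySeq fun n => f' (w n) h := by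
  obtain ⟨r, hr, hBr⟩ := hw.exists_thickening_s16
  refine cauchySeq_of_forall_exists_cauchySeq_dist_le fun ε hε => ?_
  obtain ⟨t, ht, hslope⟩ := hf.exists_norm_apply_sub_slope_le hBr hr (norm_nonneg h) hε
  obtain ⟨l, hl⟩ := hwsc (fun n => w n + t • h)
    (hBr.mono_s16 (range_subset_iff.2 fun n => (hslope _ (mem_range_self n) h le_rfl).1))
    (hwc.add_const _)
  obtain ⟨l', hl'⟩ := hwsc w hw hwc
  exact ⟨_, ((hl.sub hl').const_smul t⁻¹).cauchySeq, fun n => by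
    rw [dist_eq_norm]; exact (hslope _ (mem_range_self n) h le_rfl).2⟩

theorem tendsto_apply_zero (hp : p ≠ ⊤) (hf : C1u U f f') (hwsc : WeaklyPSeqCont p U f)
    (hw : UBoundedSeq U w) (hwc : WeaklyLpCauchy p w) {z : ℕ → X} (hz : WeaklyLpSummable p z) :
    Tendsto (fun n => f' (w n) (z n)) atTop (𝓝 0) := by
  obtain ⟨r, hr, hBr⟩ := hw.exists_thickening_s16
  obtain ⟨M, hM, hzM⟩ := (hz.isBounded_range hp).exists_pos_norm_le
  refine Metric.tendsto_atTop.2 fun ε hε => ?_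
  obtain ⟨t, ht, hslope⟩ := hf.exists_norm_apply_sub_slope_le hBr hr hM.le (half_pos hε)
  have hslope' (n : ℕ) := hslope _ (mem_range_self n) (z n) (hzM _ (mem_range_self n))
  have hdiff := (hwsc.tendsto_add_sub hp hw
    (hBr.mono_s16 (range_subset_iff.2 fun n => (hslope' n).1)) hwc (hz.const_smul hp t)).const_smul t⁻¹
  rw [smul_zero] at hdiff
  obtain ⟨N, hN⟩ := Metric.tendsto_atTop.1 hdiff (ε / 2) (half_pos hε)
  refine ⟨N, fun n hn => ?_⟩
  simp only [dist_zero_right] at hN ⊢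
  calc ‖f' (w n) (z n)‖
      ≤ ‖f' (w n) (z n) - t⁻¹ • (f (w n + t • z n) - f (w n))‖ +
        ‖t⁻¹ • (f (w n + t • z n) - f (w n))‖ := norm_le_norm_sub_add _ _
    _ < ε / 2 + ε / 2 := add_lt_add_of_le_of_lt (hslope' n).2 (hN n hn)
    _ = ε := add_halves ε

end C1u

theorem UniformlyPConvergent.uniformCauchySeqOn {K : Set (X →L[ℝ] Y)}
    (hK : UniformlyPConvergent p K) {x : ℕ → X} (hx : WeaklyLpCauchy p x) :
    UniformCauchySeqOn (fun n (T : X →L[ℝ] Y) => T (x n)) atTop K := by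
  refine Metric.uniformCauchySeqOn_iff.2 fun ε hε => ?_
  by_contra! hbad
  obtain ⟨a, b, ha, hb, hab⟩ := exists_strictMono_pair hbad
  choose T hT hab using hab
  obtain ⟨N, hN⟩ := hK _ (hx a b ha hb) ε hε
  have := hN N le_rfl _ (hT N)
  rw [map_sub, ← dist_eq_norm] at this
  exact absurd this (not_lt.2 (hab N))

theorem cauchySeq_of_uniformlyPConvergent_range
    (hball : WeaklyPPrecompact p (closedBall (0 : X) 1)) {T : ℕ → X →L[ℝ] Y}
    (hT : ∀ h, CauchySeq fun n => T n h) (hK : UniformlyPConvergent p (range T)) :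
    CauchySeq T := by
  refine Metric.cauchySeq_iff.2 fun ε hε => ?_
  by_contra! hbad
  obtain ⟨a, b, ha, hb, hab⟩ := exists_strictMono_pair hbad
  have hnorming (n : ℕ) : ∃ h ∈ closedBall (0 : X) 1, ε / 2 < dist (T (a n) h) (T (b n) h) := by
    obtain ⟨h, hh, hlt⟩ := (T (a n) - T (b n)).exists_lt_apply_of_lt_opNorm
      ((half_lt_self hε).trans_le ((dist_eq_norm _ _).symm.trans_ge (hab n)))
    exact ⟨h, mem_closedBall_zero_iff.2 hh.le, by rwa [dist_eq_norm, ← sub_apply]⟩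
  choose h hh hlt using hnorming
  obtain ⟨σ, hσ, hhσ⟩ := hball h hh
  obtain ⟨N, hN⟩ :=
    Metric.uniformCauchySeqOn_iff.1 (hK.uniformCauchySeqOn hhσ) (ε / 8) (by positivity)
  obtain ⟨N', hN'⟩ := Metric.cauchySeq_iff.1 (hT (h (σ N))) (ε / 8) (by positivity)
  set n := max N N'
  have hN'a : N' ≤ a (σ n) := (le_max_right N N').trans ((hσ.id_le n).trans (ha.id_le _))
  have hN'b : N' ≤ b (σ n) := (le_max_right N N').trans ((hσ.id_le n).trans (hb.id_le _))
  linarith [hlt (σ n), hN n (le_max_left _ _) N le_rfl _ (mem_range_self (a (σ n))),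
    hN' _ hN'a _ hN'b, hN N le_rfl n (le_max_left _ _) _ (mem_range_self (b (σ n))),
    dist_triangle4 (T (a (σ n)) (h (σ n))) (T (a (σ n)) (h (σ N))) (T (b (σ n)) (h (σ N)))
      (T (b (σ n)) (h (σ n)))]

end SequentialContinuity

namespace C1u

variable {X : Type*} [NormedAddCommGroup X] [NormedSpace ℝ X] {p : ℝ≥0∞} {U : Set X}
  {f : X → ℝ} {f' : X → X →L[ℝ] ℝ} {w : ℕ → X}

-- A violation `ε ≤ ‖f' (w (k n)) (z (a n))‖` cannot have `k` bounded, since finitely many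
-- functionals are uniformly small on the weakly null `z`, nor `k → ∞`, by `tendsto_apply_zero`.
theorem uniformlyPConvergent_range (hp : p ≠ ⊤) (hf : C1u U f f')
    (hwsc : WeaklyPSeqCont p U f) (hw : UBoundedSeq U w) (hwc : WeaklyLpCauchy p w) :
    UniformlyPConvergent p (range fun n => f' (w n)) := by
  intro z hz ε hε
  by_contra! hbad
  simp only [exists_range_iff] at hbad
  choose a ha k hk using hbad
  have ha' : Tendsto a atTop atTop := tendsto_atTop_mono ha tendsto_id
  by_cases hk' : Tendsto k atTop atTop
  · obtain ⟨φ, -, haφ, hkφ⟩ := exists_strictMono_comp_pair ha' hk'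
    have := hf.tendsto_apply_zero hp hwsc (hw.mono_s16 (range_comp_subset_range _ _))
      (hwc.comp_strictMono hkφ) (hz.comp_injective hp haφ.injective)
    obtain ⟨n, hn⟩ := (this.norm.eventually (gt_mem_nhds (by simpa using hε))).exists
    exact (hk (φ n)).not_gt (by simpa using hn)
  · obtain ⟨M, hM⟩ : ∃ M, ∃ᶠ n in atTop, k n < M := by
      simpa [Filter.tendsto_atTop, not_le, frequently_atTop] using hk'
    have hsmall : ∀ᶠ n in atTop, ∀ m ∈ Iio M, ‖f' (w m) (z (a n))‖ < ε :=
      ha'.eventually ((finite_Iio M).eventually_all.2 fun m _ =>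
        (hz.tendsto_apply hp (f' (w m))).norm.eventually (gt_mem_nhds (by simpa using hε)))
    obtain ⟨n, hnM, hn⟩ := (hM.and_eventually hsmall).exists
    exact (hk n).not_gt (hn _ hnM)

theorem cauchySeq_comp (hp : p ≠ ⊤) (hball : WeaklyPPrecompact p (closedBall (0 : X) 1))
    (hf : C1u U f f') (hwsc : WeaklyPSeqCont p U f) (hw : UBoundedSeq U w)
    (hwc : WeaklyLpCauchy p w) : CauchySeq fun n => f' (w n) :=
  cauchySeq_of_uniformlyPConvergent_range hball (hf.cauchySeq_apply hwsc hw hwc)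
    (hf.uniformlyPConvergent_range hp hwsc hw hwc)

end C1u

theorem deriv_relatively_compact_of_Lsets_general
    {X : Type*} [NormedAddCommGroup X] [NormedSpace ℝ X]
    (p : ℝ≥0∞) (hp' : p ≠ ⊤)
    (hball : WeaklyPPrecompact p (Metric.closedBall (0 : X) 1))
    (U : Set X)
    (f : X → ℝ) (f' : X → X →L[ℝ] ℝ) (hf : C1u U f f')
    (hwsc : WeaklyPSeqCont p U f) :
    ∀ B : Set X, UBounded U B → IsCompact (closure (f' '' B)) := by
  intro B hB
  refine (totallyBounded_of_forall_exists_cauchySeq fun u hu => ?_).closure.isCompact_of_isClosed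
    isClosed_closure
  choose y hyB hyu using hu
  obtain ⟨σ, hσ, hyσ⟩ := hball.of_isBounded hp' hB.2.1 y hyB
  refine ⟨σ, hσ, ?_⟩
  simpa only [Function.comp_def, ← hyu] using
    hf.cauchySeq_comp hp' hball hwsc (hB.mono_s16 (range_subset_iff.2 fun n => hyB (σ n))) hyσ

/-- If `B_X` is weakly `p`-precompact, `f ∈ C^{1u}(U,ℝ)` is weakly `p`-sequentially
continuous, and every uniformly `p`-convergent subset of `X* = K(X,ℝ)` is uniformly
completely continuous (an `(L)`-set), then `f'` maps `U`-bounded sets into relatively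
compact subsets of `X*`. -/
theorem deriv_relatively_compact_of_Lsets
    {X : Type*} [NormedAddCommGroup X] [NormedSpace ℝ X] [CompleteSpace X]
    (p : ℝ≥0∞) (hp : 1 ≤ p) (hp' : p ≠ ⊤)
    (hball : WeaklyPPrecompact p (Metric.closedBall (0 : X) 1))
    (U : Set X) (hU : IsOpen U) (hUc : Convex ℝ U)
    (f : X → ℝ) (f' : X → X →L[ℝ] ℝ) (hf : C1u U f f')
    (hwsc : WeaklyPSeqCont p U f)
    (hLsets : ∀ K : Set (X →L[ℝ] ℝ), UniformlyPConvergent p K →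
      ∀ x : ℕ → X,
        (∀ φ : X →L[ℝ] ℝ, Filter.Tendsto (fun n => φ (x n)) Filter.atTop (nhds 0)) →
        ∀ ε > 0, ∃ N : ℕ, ∀ n ≥ N, ∀ φ ∈ K, |φ (x n)| < ε) :
    ∀ B : Set X, UBounded U B → IsCompact (closure (f' '' B)) :=
  deriv_relatively_compact_of_Lsets_general p hp' hball U f f' hf hwsc
end
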